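/- For every α ∈ [0,1] there exist qubit states ρ_x for x ∈ {0,1}², 2×2 complex matrices Π⁰, Π¹ that are Hermitian, idempotent and have trace 1, qubit states τ^y_b for y,b ∈ {0,1}, and two-outcome qubit POVMs (C^z_0, C^z_1) for z ∈ {0,1}, such that with B^y_0 = Π^y and B^y_1 = I − Π^y one has (α/8)·Σ_{x,y} tr(ρ_x B^y_{x_y}) + ((1−α)/16)·Σ_{x,y,z,b} tr(ρ_x B^y_b)·tr(τ^y_b C^z_{x_z}) = 1/2 + √(1+α²)/4. (The bound for the measure-and-prepare projective strategy is tight.) -/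

import Mathlib

open Matrix
open scoped ComplexOrder

noncomputable section

abbrev Mat2 := Matrix (Fin 2) (Fin 2) ℂ

/-- A qubit state: a positive semidefinite 2×2 complex matrix with unit trace. -/
def IsQubitState (ρ : Mat2) : Prop := ρ.PosSemidef ∧ ρ.trace = 1

/-- A two-outcome qubit POVM: a pair of positive semidefinite matrices summing to the identity. -/
def IsPOVMPair (E₀ E₁ : Mat2) : Prop := E₀.PosSemidef ∧ E₁.PosSemidef ∧ E₀ + E₁ = 1

/-- The `y`-th bit of the pair `(x₀, x₁)`. -/
def sel (x₀ x₁ y : Fin 2) : Fin 2 := if y = 0 then x₀ else x₁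


/-!
Alice sends the four BB84 states, with Bloch vectors `e_z, -e_x, e_x, -e_z` for
`x = 00, 01, 10, 11`. Bob measures along the Bloch vector `c e_z ∓ s e_x` for `y = 0, 1`, with
`c² + s² = 1`, and re-prepares the computational-basis state labelled by his outcome, which the
final measurement in that basis reads out perfectly. Since `tr(ρ σ) = (1 + r ⬝ n) / 2` for
qubit operators with Bloch vectors `r` and `n`, the value of this strategy is
`1/2 + (c + α s)/4`, and the unit vector `(c, s) = (1, α) / √(1 + α²)` makes it
`1/2 + √(1 + α²)/4`.
-/

/-- `bloch a b = (1 + a σ_z + b σ_x) / 2`, the qubit operator with Bloch vector `(b, 0, a)`. -/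
def bloch (a b : ℝ) : Mat2 := !![(1 + a) / 2, b / 2; b / 2, (1 - a) / 2]

lemma bloch_isHermitian (a b : ℝ) : (bloch a b).IsHermitian := by
  ext i j
  fin_cases i <;> fin_cases j <;> simp [bloch, Complex.conj_ofReal]

lemma bloch_mul_self {a b : ℝ} (h : a ^ 2 + b ^ 2 = 1) : bloch a b * bloch a b = bloch a b := by
  have h' : (a : ℂ) ^ 2 + (b : ℂ) ^ 2 = 1 := by exact_mod_cast h
  ext i j
  fin_cases i <;> fin_cases j <;> simp [bloch] <;> first | linear_combination h' / 4 | ring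

lemma trace_bloch (a b : ℝ) : (bloch a b).trace = 1 := by
  simp [bloch, trace_fin_two]
  ring

lemma trace_bloch_mul (a b a' b' : ℝ) :
    (bloch a b * bloch a' b').trace = ((1 + a * a' + b * b') / 2 : ℝ) := by
  simp [bloch, trace_fin_two]
  ring

lemma one_sub_bloch (a b : ℝ) : 1 - bloch a b = bloch (-a) (-b) := by
  ext i j
  fin_cases i <;> fin_cases j <;> simp [bloch, one_fin_two] <;> ring

lemma bloch_add_bloch_neg (a b : ℝ) : bloch a b + bloch (-a) (-b) = 1 := by
  rw [← one_sub_bloch, add_sub_cancel]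

lemma posSemidef_of_isHermitian_of_mul_self {n R : Type*} [Fintype n] [Ring R] [PartialOrder R]
    [StarRing R] [StarOrderedRing R] {M : Matrix n n R} (hM : M.IsHermitian) (h : M * M = M) :
    M.PosSemidef := by
  simpa [hM.eq, h] using posSemidef_conjTranspose_mul_self M

lemma posSemidef_bloch {a b : ℝ} (h : a ^ 2 + b ^ 2 = 1) : (bloch a b).PosSemidef :=
  posSemidef_of_isHermitian_of_mul_self (bloch_isHermitian a b) (bloch_mul_self h)

lemma isQubitState_bloch {a b : ℝ} (h : a ^ 2 + b ^ 2 = 1) : IsQubitState (bloch a b) :=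
  ⟨posSemidef_bloch h, trace_bloch a b⟩

lemma isPOVMPair_bloch {a b : ℝ} (h : a ^ 2 + b ^ 2 = 1) :
    IsPOVMPair (bloch a b) (bloch (-a) (-b)) :=
  ⟨posSemidef_bloch h, posSemidef_bloch (by rwa [neg_sq, neg_sq]), bloch_add_bloch_neg a b⟩

def measurePrepareValue (α : ℝ) (ρ B τ C : Fin 2 → Fin 2 → Mat2) : ℝ :=
  α / 8 * ∑ x₀ : Fin 2, ∑ x₁ : Fin 2, ∑ y : Fin 2, ((ρ x₀ x₁ * B y (sel x₀ x₁ y)).trace).re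
    + (1 - α) / 16 * ∑ x₀ : Fin 2, ∑ x₁ : Fin 2, ∑ y : Fin 2, ∑ z : Fin 2, ∑ b : Fin 2,
        ((ρ x₀ x₁ * B y b).trace * (τ y b * C z (sel x₀ x₁ z)).trace).re

def bb84State : Fin 2 → Fin 2 → Mat2 :=
  ![![bloch 1 0, bloch 0 (-1)], ![bloch 0 1, bloch (-1) 0]]

def bobProj (c s : ℝ) : Fin 2 → Mat2 := ![bloch c (-s), bloch c s]

def bobEffect (c s : ℝ) (y : Fin 2) : Fin 2 → Mat2 := ![bobProj c s y, 1 - bobProj c s y]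

def basisState : Fin 2 → Mat2 := ![bloch 1 0, bloch (-1) 0]

lemma isQubitState_bb84State (x₀ x₁ : Fin 2) : IsQubitState (bb84State x₀ x₁) := by
  fin_cases x₀ <;> fin_cases x₁ <;> exact isQubitState_bloch (by norm_num)

lemma isQubitState_basisState (b : Fin 2) : IsQubitState (basisState b) := by
  fin_cases b <;> exact isQubitState_bloch (by norm_num)

lemma isPOVMPair_basisState : IsPOVMPair (basisState 0) (basisState 1) := by
  simpa [basisState] using isPOVMPair_bloch (a := 1) (b := 0) (by norm_num)

lemma bobProj_isProjection {c s : ℝ} (h : c ^ 2 + s ^ 2 = 1) (y : Fin 2) :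
    (bobProj c s y).IsHermitian ∧ bobProj c s y * bobProj c s y = bobProj c s y ∧
      (bobProj c s y).trace = 1 := by
  have h' : c ^ 2 + (-s) ^ 2 = 1 := by rwa [neg_sq]
  fin_cases y
  · exact ⟨bloch_isHermitian _ _, bloch_mul_self h', trace_bloch _ _⟩
  · exact ⟨bloch_isHermitian _ _, bloch_mul_self h, trace_bloch _ _⟩

lemma measurePrepareValue_bb84 (α c s : ℝ) :
    measurePrepareValue α bb84State (bobEffect c s) (fun _ => basisState) (fun _ => basisState)
      = 1 / 2 + (c + α * s) / 4 := by
  simp only [measurePrepareValue, Fin.sum_univ_two, sel, bb84State, bobEffect, bobProj, basisState,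
    Fin.isValue, one_ne_zero, if_true, if_false, Matrix.cons_val_zero, Matrix.cons_val_one,
    one_sub_bloch, trace_bloch_mul, ← Complex.ofReal_mul, Complex.ofReal_re]
  ring

theorem measure_and_prepare_bound_tight (α : ℝ) :
    ∃ (ρ : Fin 2 → Fin 2 → Mat2) (Pj : Fin 2 → Mat2) (τ : Fin 2 → Fin 2 → Mat2)
      (C : Fin 2 → Fin 2 → Mat2) (B : Fin 2 → Fin 2 → Mat2),
      (∀ x₀ x₁, IsQubitState (ρ x₀ x₁)) ∧
      (∀ y, (Pj y).IsHermitian ∧ Pj y * Pj y = Pj y ∧ (Pj y).trace = 1) ∧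
      (∀ y b, IsQubitState (τ y b)) ∧
      (∀ z, IsPOVMPair (C z 0) (C z 1)) ∧
      (∀ y, B y 0 = Pj y ∧ B y 1 = 1 - Pj y) ∧
      α / 8 * ∑ x₀ : Fin 2, ∑ x₁ : Fin 2, ∑ y : Fin 2,
          ((ρ x₀ x₁ * B y (sel x₀ x₁ y)).trace).re
        + (1 - α) / 16 * ∑ x₀ : Fin 2, ∑ x₁ : Fin 2, ∑ y : Fin 2, ∑ z : Fin 2, ∑ b : Fin 2,
            ((ρ x₀ x₁ * B y b).trace * (τ y b * C z (sel x₀ x₁ z)).trace).re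
        = 1 / 2 + Real.sqrt (1 + α ^ 2) / 4 := by
  set t := Real.sqrt (1 + α ^ 2)
  have ht : 0 < t := by positivity
  have ht2 : t ^ 2 = 1 + α ^ 2 := Real.sq_sqrt (by positivity)
  have hunit : (1 / t) ^ 2 + (α / t) ^ 2 = 1 := by
    field_simp
    linarith
  refine ⟨bb84State, bobProj (1 / t) (α / t), fun _ => basisState, fun _ => basisState,
    bobEffect (1 / t) (α / t), isQubitState_bb84State, bobProj_isProjection hunit,
    fun _ => isQubitState_basisState, fun _ => isPOVMPair_basisState, fun _ => ⟨rfl, rfl⟩, ?_⟩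
  refine (measurePrepareValue_bb84 α _ _).trans ?_
  field_simp
  linarith
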